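/- arXiv:2605.30754 — 4 statements merged into one kernel-verified Lean document; each statement's English description precedes it below -/
import Mathlib

section
/- If A ⊆ ℤⁿ is a nonempty B-convex set (i.e., satisfies the type-B exchange axiom: for all x, y ∈ A and coordinate i with x_i > y_i, either (1) x - e_i and y + e_i are both in A, or (2) there exists j with x_j < y_j such that x - e_i + e_j and y + e_i - e_j are both in A, or (3) there exists j ≠ i with x_j > y_j such that x - e_i - e_j and y + e_i + e_j are both in A), then A is hole-free, i.e., conv(A) ∩ ℤⁿ = A. -/
/-- The `i`-th standard basis vector of `ℤⁿ`. -/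
def eZ (n : ℕ) (i : Fin n) : Fin n → ℤ := fun j => if j = i then 1 else 0

/-- Embedding of `ℤⁿ` into `ℝⁿ`. -/
def toR {n : ℕ} (x : Fin n → ℤ) : Fin n → ℝ := fun i => (x i : ℝ)

/-- A set `A ⊆ ℤⁿ` is B-convex (M♮-convex of type B) if it satisfies
the type-B exchange axiom. -/
def BConvexSet {n : ℕ} (A : Set (Fin n → ℤ)) : Prop :=
  ∀ x ∈ A, ∀ y ∈ A, ∀ i : Fin n, y i < x i →
    ((x - eZ n i ∈ A ∧ y + eZ n i ∈ A) ∨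
     (∃ j, x j < y j ∧ x - eZ n i + eZ n j ∈ A ∧ y + eZ n i - eZ n j ∈ A) ∨
     (∃ j, j ≠ i ∧ y j < x j ∧ x - eZ n i - eZ n j ∈ A ∧ y + eZ n i + eZ n j ∈ A))

/-- ℓ¹ distance to `z`. -/
def cZ {n : ℕ} (z v : Fin n → ℤ) : ℤ := ∑ i, |v i - z i|

lemma cZ_nonneg {n : ℕ} (z v : Fin n → ℤ) : 0 ≤ cZ z v :=
  Finset.sum_nonneg fun _ _ => abs_nonneg _

lemma cZ_eq_zero {n : ℕ} {z v : Fin n → ℤ} (h : cZ z v = 0) : v = z := by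
  funext i
  have := (Finset.sum_eq_zero_iff_of_nonneg (fun i _ => abs_nonneg (v i - z i))).1 h i
    (Finset.mem_univ i)
  have := abs_eq_zero.1 this
  omega

lemma abs_pair (p q t : ℤ) (h : p < q) : |p+1-t| + |q-1-t| ≤ |p-t| + |q-t| := by
  rcases abs_cases (p+1-t) with ⟨h1,_⟩|⟨h1,_⟩ <;> rcases abs_cases (q-1-t) with ⟨h2,_⟩|⟨h2,_⟩ <;>
  rcases abs_cases (p-t) with ⟨h3,_⟩|⟨h3,_⟩ <;> rcases abs_cases (q-t) with ⟨h4,_⟩|⟨h4,_⟩ <;> omega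

lemma abs_pair_i (p q t : ℤ) (hp : t < p) (hq : q < t) :
    |p - 1 - t| + |q + 1 - t| + 2 ≤ |p - t| + |q - t| := by
  rcases abs_cases (p-1-t) with ⟨h1,_⟩|⟨h1,_⟩ <;> rcases abs_cases (q+1-t) with ⟨h2,_⟩|⟨h2,_⟩ <;>
  rcases abs_cases (p-t) with ⟨h3,_⟩|⟨h3,_⟩ <;> rcases abs_cases (q-t) with ⟨h4,_⟩|⟨h4,_⟩ <;> omega

lemma cZ_key {n : ℕ} (z a b u v : Fin n → ℤ) (i : Fin n)
    (hout : ∀ k, k ≠ i → |u k - z k| + |v k - z k| ≤ |a k - z k| + |b k - z k|)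
    (hin : |u i - z i| + |v i - z i| + 2 ≤ |a i - z i| + |b i - z i|) :
    cZ z u + cZ z v + 2 ≤ cZ z a + cZ z b := by
  unfold cZ
  rw [← Finset.sum_add_distrib, ← Finset.sum_add_distrib,
    ← Finset.add_sum_erase (f := fun k => |u k - z k| + |v k - z k|) Finset.univ (Finset.mem_univ i),
    ← Finset.add_sum_erase (f := fun k => |a k - z k| + |b k - z k|) Finset.univ (Finset.mem_univ i)]
  have : ∑ k ∈ Finset.univ.erase i, (|u k - z k| + |v k - z k|)
      ≤ ∑ k ∈ Finset.univ.erase i, (|a k - z k| + |b k - z k|) := by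
    apply Finset.sum_le_sum
    intro k hk
    exact hout k (Finset.mem_erase.1 hk).1
  linarith


lemma exchange_step {n : ℕ} {A : Set (Fin n → ℤ)} (hB : BConvexSet A) (z a b : Fin n → ℤ)
    (ha : a ∈ A) (hb : b ∈ A) (i : Fin n) (h1 : b i < z i) (h2 : z i < a i) :
    ∃ u v, u ∈ A ∧ v ∈ A ∧ (∀ k, u k + v k = a k + b k) ∧ u i = a i - 1 ∧ v i = b i + 1 ∧
      cZ z u + cZ z v + 2 ≤ cZ z a + cZ z b := by
  rcases hB a ha b hb i (lt_trans h1 h2) with ⟨h3,h4⟩ | ⟨j, hj, h3, h4⟩ | ⟨j, hji, hj, h3, h4⟩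
  · have hui : (a - eZ n i) i = a i - 1 := by simp [eZ]
    have hvi : (b + eZ n i) i = b i + 1 := by simp [eZ]
    refine ⟨_, _, h3, h4, fun k => by simp [eZ]; try ring, hui, hvi, ?_⟩
    apply cZ_key _ _ _ _ _ i
    · intro k hk; simp [eZ, hk]
    · rw [hui, hvi]; exact abs_pair_i _ _ _ h2 h1
  · have hji : j ≠ i := by rintro rfl; omega
    have hui : (a - eZ n i + eZ n j) i = a i - 1 := by simp [eZ, Ne.symm hji]
    have hvi : (b + eZ n i - eZ n j) i = b i + 1 := by simp [eZ, Ne.symm hji]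
    have huj : (a - eZ n i + eZ n j) j = a j + 1 := by simp [eZ, hji]
    have hvj : (b + eZ n i - eZ n j) j = b j - 1 := by simp [eZ, hji]
    refine ⟨_, _, h3, h4, fun k => by simp [eZ]; try ring, hui, hvi, ?_⟩
    apply cZ_key _ _ _ _ _ i
    · intro k hk
      rcases eq_or_ne k j with rfl | hkj
      · rw [huj, hvj]; exact abs_pair _ _ _ hj
      · simp [eZ, hk, hkj]
    · rw [hui, hvi]; exact abs_pair_i _ _ _ h2 h1
  · have hui : (a - eZ n i - eZ n j) i = a i - 1 := by simp [eZ, Ne.symm hji]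
    have hvi : (b + eZ n i + eZ n j) i = b i + 1 := by simp [eZ, Ne.symm hji]
    have huj : (a - eZ n i - eZ n j) j = a j - 1 := by simp [eZ, hji]
    have hvj : (b + eZ n i + eZ n j) j = b j + 1 := by simp [eZ, hji]
    refine ⟨_, _, h3, h4, fun k => by simp [eZ]; try ring, hui, hvi, ?_⟩
    apply cZ_key _ _ _ _ _ i
    · intro k hk
      rcases eq_or_ne k j with rfl | hkj
      · rw [huj, hvj]
        have := abs_pair (b k) (a k) (z k) hj
        linarith
      · simp [eZ, hk, hkj]
    · rw [hui, hvi]; exact abs_pair_i _ _ _ h2 h1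

lemma exists_neg_term {ι : Type*} (s : Finset ι) (f : ι → ℝ)
    (hsum : ∑ v ∈ s, f v = 0) {a : ι} (ha : a ∈ s) (hfa : 0 < f a) : ∃ b ∈ s, f b < 0 := by
  by_contra h
  push_neg at h
  have := Finset.single_le_sum h ha
  linarith

lemma toR_injective {n : ℕ} : Function.Injective (toR (n := n)) := by
  intro x y h
  funext i
  have := congrFun h i
  simp only [toR] at this
  exact_mod_cast this

/-- A nonempty (finite) B-convex set is hole-free: `conv(A) ∩ ℤⁿ = A`. -/
theorem bconvex_holeFree {n : ℕ} (A : Set (Fin n → ℤ)) (hfin : A.Finite)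
    (hne : A.Nonempty) (hB : BConvexSet A) :
    ∀ x : Fin n → ℤ, toR x ∈ convexHull ℝ (toR '' A) ↔ x ∈ A := by
  classical
  intro z
  constructor
  swap
  · intro h; exact subset_convexHull ℝ _ ⟨z, h, rfl⟩
  intro hz
  by_contra hzA
  set s : Finset (Fin n → ℤ) := hfin.toFinset with hs
  have hmem : ∀ v, v ∈ s ↔ v ∈ A := fun v => hfin.mem_toFinset
  set W : Set ((Fin n → ℤ) → ℝ) := {w | (∀ v, 0 ≤ w v) ∧ (∀ v, v ∉ s → w v = 0) ∧
      (∑ v ∈ s, w v) = 1 ∧ ∀ k, (∑ v ∈ s, w v * (v k : ℝ)) = (z k : ℝ)} with hWdef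
  set Φ : ((Fin n → ℤ) → ℝ) → ℝ := fun w => ∑ v ∈ s, w v * (cZ z v : ℝ) with hΦdef
  -- W is nonempty
  have hWne : W.Nonempty := by
    have himg : toR '' A = ↑(s.image toR) := by
      rw [Finset.coe_image, hs, hfin.coe_toFinset]
    rw [himg, Finset.convexHull_eq] at hz
    obtain ⟨w0, hw0nn, hw0sum, hw0cm⟩ := hz
    rw [Finset.centerMass_eq_of_sum_1 _ _ hw0sum] at hw0cm
    have hinj : ∀ x ∈ s, ∀ y ∈ s, toR x = toR y → x = y := fun x _ y _ h => toR_injective h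
    refine ⟨fun v => if v ∈ s then w0 (toR v) else 0, ?_, ?_, ?_, ?_⟩
    · intro v
      by_cases h : v ∈ s
      · simp only [if_pos h]
        exact hw0nn _ (Finset.mem_image_of_mem _ h)
      · simp [h]
    · intro v h; simp [h]
    · calc ∑ v ∈ s, (if v ∈ s then w0 (toR v) else 0)
            = ∑ v ∈ s, w0 (toR v) := Finset.sum_congr rfl (fun v hv => if_pos hv)
          _ = ∑ y ∈ s.image toR, w0 y := (Finset.sum_image (g := toR) (f := w0) hinj).symm
          _ = 1 := hw0sum
    · intro k
      have hck := congrFun hw0cm k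
      rw [Finset.sum_apply] at hck
      calc ∑ v ∈ s, (if v ∈ s then w0 (toR v) else 0) * ((v k : ℝ))
          = ∑ v ∈ s, w0 (toR v) * ((toR v) k) :=
            Finset.sum_congr rfl (fun v hv => by rw [if_pos hv]; rfl)
        _ = ∑ y ∈ s.image toR, w0 y * y k :=
            (Finset.sum_image (g := toR) (f := fun y => w0 y * y k) hinj).symm
        _ = ∑ y ∈ s.image toR, (w0 y • id y) k := by
            apply Finset.sum_congr rfl; intro y _; simp
        _ = toR z k := hck
        _ = (z k : ℝ) := rfl
  -- W is compact
  have hWclosed : IsClosed W := by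
    have : W = (⋂ v, (fun w : (Fin n → ℤ) → ℝ => w v) ⁻¹' Set.Ici 0) ∩
        ((⋂ v ∈ (↑s : Set (Fin n → ℤ))ᶜ, {w : (Fin n → ℤ) → ℝ | w v = 0}) ∩
        (({w : (Fin n → ℤ) → ℝ | ∑ v ∈ s, w v = 1}) ∩
        (⋂ k, {w : (Fin n → ℤ) → ℝ | ∑ v ∈ s, w v * (v k : ℝ) = (z k : ℝ)}))) := by
      ext w
      simp only [hWdef, Set.mem_setOf_eq, Set.mem_inter_iff, Set.mem_iInter, Set.mem_preimage,
        Set.mem_Ici, Set.mem_compl_iff, Finset.mem_coe]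
    rw [this]
    refine IsClosed.inter (isClosed_iInter fun v => isClosed_Ici.preimage (continuous_apply v))
      (IsClosed.inter (isClosed_biInter fun v _ =>
        isClosed_eq (continuous_apply v) continuous_const)
      (IsClosed.inter (isClosed_eq (continuous_finset_sum s fun v _ => continuous_apply v)
        continuous_const)
      (isClosed_iInter fun k => isClosed_eq
        (continuous_finset_sum s fun v _ => (continuous_apply v).mul continuous_const)
        continuous_const)))
  have hWcompact : IsCompact W := by
    refine IsCompact.of_isClosed_subset
      (isCompact_univ_pi fun _ : (Fin n → ℤ) => (isCompact_Icc : IsCompact (Set.Icc (0:ℝ) 1)))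
      hWclosed ?_
    intro w hw
    obtain ⟨hnn, hsupp, hsum, -⟩ := hw
    intro v _
    by_cases h : v ∈ s
    · refine ⟨hnn v, ?_⟩
      rw [← hsum]
      exact Finset.single_le_sum (fun x _ => hnn x) h
    · rw [hsupp v h]; exact ⟨le_refl _, zero_le_one⟩
  have hΦcont : Continuous Φ :=
    continuous_finset_sum s fun v _ => (continuous_apply v).mul continuous_const
  obtain ⟨w, hwW, hwmin⟩ := hWcompact.exists_isMinOn hWne hΦcont.continuousOn
  obtain ⟨hwnn, hwsupp, hwsum, hwcoord⟩ := hwW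
  -- find a point a in the support, a ≠ z
  have hzs : z ∉ s := fun h => hzA ((hmem z).1 h)
  obtain ⟨a, has, hwa0⟩ : ∃ a ∈ s, w a ≠ 0 :=
    Finset.exists_ne_zero_of_sum_ne_zero (by rw [hwsum]; norm_num)
  have hwa : 0 < w a := lt_of_le_of_ne (hwnn a) (Ne.symm hwa0)
  have haz : a ≠ z := fun h => hzs (h ▸ has)
  obtain ⟨i, hi⟩ : ∃ i, a i ≠ z i := by
    by_contra h
    push_neg at h
    exact haz (funext h)
  -- balance at coordinate i
  have hbal : ∑ v ∈ s, w v * ((v i : ℝ) - (z i : ℝ)) = 0 := by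
    simp only [mul_sub]
    rw [Finset.sum_sub_distrib, hwcoord i, ← Finset.sum_mul, hwsum, one_mul, sub_self]
  -- get the pair p, q with q i < z i < p i, both with positive weight
  obtain ⟨p, q, hps, hqs, hwp, hwq, hqi, hpi⟩ : ∃ p q, p ∈ s ∧ q ∈ s ∧ 0 < w p ∧ 0 < w q ∧
      q i < z i ∧ z i < p i := by
    rcases lt_or_gt_of_ne hi with hlt | hgt
    · -- a i < z i : a plays the role of q
      have hterm : 0 < w a * ((z i : ℝ) - (a i : ℝ)) := by
        apply mul_pos hwa
        rw [sub_pos]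
        exact_mod_cast hlt
      have hbal' : ∑ v ∈ s, w v * ((z i : ℝ) - (v i : ℝ)) = 0 := by
        rw [← neg_eq_zero, ← Finset.sum_neg_distrib]
        rw [← hbal]
        apply Finset.sum_congr rfl
        intro v _; ring
      obtain ⟨p, hp, hpneg⟩ := exists_neg_term s _ hbal' has hterm
      have hwp : 0 < w p := by
        rcases lt_or_eq_of_le (hwnn p) with h | h
        · exact h
        · exfalso; rw [← h, zero_mul] at hpneg; exact lt_irrefl _ hpneg
      have hpgt : (z i : ℝ) < (p i : ℝ) := by nlinarith
      exact ⟨p, a, hp, has, hwp, hwa, hlt, by exact_mod_cast hpgt⟩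
    · -- a i > z i : a plays the role of p
      have hterm : 0 < w a * ((a i : ℝ) - (z i : ℝ)) := by
        apply mul_pos hwa
        rw [sub_pos]
        exact_mod_cast hgt
      obtain ⟨q, hq, hqneg⟩ := exists_neg_term s _ hbal has hterm
      have hwq : 0 < w q := by
        rcases lt_or_eq_of_le (hwnn q) with h | h
        · exact h
        · exfalso; rw [← h, zero_mul] at hqneg; exact lt_irrefl _ hqneg
      have hqlt : (q i : ℝ) < (z i : ℝ) := by nlinarith
      exact ⟨a, q, has, hq, hwa, hwq, by exact_mod_cast hqlt, hgt⟩
  -- exchange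
  obtain ⟨u, v, huA, hvA, hsumuv, hui, hvi, hcle⟩ :=
    exchange_step hB z p q ((hmem p).1 hps) ((hmem q).1 hqs) i hqi hpi
  have hus : u ∈ s := (hmem u).2 huA
  have hvs : v ∈ s := (hmem v).2 hvA
  have hunep : u ≠ p := fun h => by rw [h] at hui; omega
  have huneq : u ≠ q := fun h => by rw [h] at hui; omega
  have hvnep : v ≠ p := fun h => by rw [h] at hvi; omega
  have hvneq : v ≠ q := fun h => by rw [h] at hvi; omega
  have hpneq : p ≠ q := fun h => by rw [h] at hpi; omega
  set ε : ℝ := min (w p) (w q) / 2 with hε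
  have hεpos : 0 < ε := by
    rw [hε]
    have := lt_min hwp hwq
    linarith
  have hεp : ε ≤ w p / 2 := by
    rw [hε]; have := min_le_left (w p) (w q); linarith
  have hεq : ε ≤ w q / 2 := by
    rw [hε]; have := min_le_right (w p) (w q); linarith
  set w' : (Fin n → ℤ) → ℝ := fun x => w x + ε *
      (((if x = u then (1:ℝ) else 0) + (if x = v then (1:ℝ) else 0)) -
       ((if x = p then (1:ℝ) else 0) + (if x = q then (1:ℝ) else 0))) with hw'def
  have hkey : ∀ c ∈ s, ∀ g : (Fin n → ℤ) → ℝ,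
      ∑ x ∈ s, (if x = c then (1:ℝ) else 0) * g x = g c := by
    intro c hc g
    rw [Finset.sum_congr rfl (fun x _ => by rw [ite_mul, one_mul, zero_mul]),
      Finset.sum_ite_eq' s c g, if_pos hc]
  have hexpand : ∀ g : (Fin n → ℤ) → ℝ, ∑ x ∈ s, w' x * g x =
      (∑ x ∈ s, w x * g x) + ε * (g u + g v - (g p + g q)) := by
    intro g
    have hterm : ∀ x, w' x * g x = w x * g x + ε *
        (((if x = u then (1:ℝ) else 0) * g x + (if x = v then (1:ℝ) else 0) * g x) -
         ((if x = p then (1:ℝ) else 0) * g x + (if x = q then (1:ℝ) else 0) * g x)) := by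
      intro x; rw [hw'def]; ring
    rw [Finset.sum_congr rfl fun x _ => hterm x, Finset.sum_add_distrib, ← Finset.mul_sum,
      Finset.sum_sub_distrib, Finset.sum_add_distrib, Finset.sum_add_distrib,
      hkey u hus g, hkey v hvs g, hkey p hps g, hkey q hqs g]
  have hw'W : w' ∈ W := by
    refine ⟨?_, ?_, ?_, ?_⟩
    · intro x
      simp only [hw'def]
      by_cases hxp : x = p
      · subst hxp
        rw [if_neg (fun h : x = u => hunep h.symm), if_neg (fun h : x = v => hvnep h.symm),
          if_pos rfl, if_neg (fun h : x = q => hpneq h)]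
        linarith
      by_cases hxq : x = q
      · subst hxq
        rw [if_neg (fun h : x = u => huneq h.symm), if_neg (fun h : x = v => hvneq h.symm),
          if_neg hxp, if_pos rfl]
        linarith
      · rw [if_neg hxp, if_neg hxq]
        have h1 := hwnn x
        split_ifs <;> simp <;> linarith
    · intro x hx
      have hxu : x ≠ u := fun h => hx (h ▸ hus)
      have hxv : x ≠ v := fun h => hx (h ▸ hvs)
      have hxp : x ≠ p := fun h => hx (h ▸ hps)
      have hxq : x ≠ q := fun h => hx (h ▸ hqs)
      simp only [hw'def]
      rw [if_neg hxu, if_neg hxv, if_neg hxp, if_neg hxq, hwsupp x hx]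
      ring
    · have := hexpand (fun _ => 1)
      simp only [mul_one] at this
      rw [this, hwsum]
      ring
    · intro k
      have := hexpand (fun x => (x k : ℝ))
      rw [this, hwcoord k]
      have h0 : ((u k : ℝ) + (v k : ℝ) - ((p k : ℝ) + (q k : ℝ))) = 0 := by
        have h2 : ((u k : ℝ) + (v k : ℝ) = (p k : ℝ) + (q k : ℝ)) := by
          exact_mod_cast hsumuv k
        linarith
      rw [h0]
      ring
  -- Φ decreases
  have hΦlt : Φ w' < Φ w := by
    have hΦw' : Φ w' = ∑ x ∈ s, w' x * (cZ z x : ℝ) := rfl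
    have hΦw : Φ w = ∑ x ∈ s, w x * (cZ z x : ℝ) := rfl
    rw [hΦw', hΦw, hexpand (fun x => (cZ z x : ℝ))]
    have hc : ((cZ z u : ℝ) + (cZ z v : ℝ) - ((cZ z p : ℝ) + (cZ z q : ℝ))) ≤ -2 := by
      have h2 : ((cZ z u : ℝ) + (cZ z v : ℝ) + 2 ≤ (cZ z p : ℝ) + (cZ z q : ℝ)) := by
        exact_mod_cast hcle
      linarith
    nlinarith
  exact absurd (hwmin hw'W) (not_le.2 hΦlt)
end

section
/- If A ⊆ ℤⁿ is a finite B-convex set whose convex hull conv(A) is 1-dimensional, then conv(A) is a line segment parallel to some e_i or to e_i + e_j or e_i - e_j for some i ≠ j. -/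
lemma key {n : ℕ} (A : Set (Fin n → ℤ))
    (hdim : Module.finrank ℝ (vectorSpan ℝ (toR '' A)) = 1)
    (v : Fin n → ℤ) (i₀ : Fin n) (hv : v i₀ = 1)
    (x : Fin n → ℤ) (hx : x ∈ A) (hx' : x - v ∈ A) :
    ∀ a ∈ A, ∀ b ∈ A, ∃ k : ℤ, a - b = k • v := by
  set w : Fin n → ℝ := toR v with hw
  have hwV : w ∈ vectorSpan ℝ (toR '' A) := by
    have h := vsub_mem_vectorSpan ℝ (Set.mem_image_of_mem toR hx)
      (Set.mem_image_of_mem toR hx')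
    have : toR x -ᵥ toR (x - v) = w := by
      funext m
      simp [toR, hw]
    rwa [this] at h
  have hw0 : w ≠ 0 := by
    intro h
    have := congrFun h i₀
    simp [hw, toR, hv] at this
  have hspan : Submodule.span ℝ {w} = vectorSpan ℝ (toR '' A) := by
    apply Submodule.eq_of_le_of_finrank_le
    · rw [Submodule.span_singleton_le_iff_mem]; exact hwV
    · rw [hdim, finrank_span_singleton hw0]
  intro a ha b hb
  have hm : toR a - toR b ∈ Submodule.span ℝ {w} := by
    rw [hspan]
    have := vsub_mem_vectorSpan ℝ (Set.mem_image_of_mem toR ha)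
      (Set.mem_image_of_mem toR hb)
    simpa using this
  obtain ⟨r, hr⟩ := Submodule.mem_span_singleton.mp hm
  have hri : r = ((a i₀ - b i₀ : ℤ) : ℝ) := by
    have h1 := congrFun hr i₀
    simp [hw, toR, hv] at h1
    push_cast
    exact h1
  refine ⟨a i₀ - b i₀, ?_⟩
  funext m
  have h2 := congrFun hr m
  simp [hw, toR, hri] at h2
  have h3 : ((a m - b m : ℤ) : ℝ) = (((a i₀ - b i₀) * v m : ℤ) : ℝ) := by
    push_cast
    push_cast at h2
    linarith
  have := Int.cast_injective (α := ℝ) h3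
  simpa [Pi.smul_apply, smul_eq_mul] using this


/-- If `A ⊆ ℤⁿ` is a finite B-convex set whose convex hull is 1-dimensional,
then `conv(A)` is parallel to some `e_i` or `e_i ± e_j` with `i ≠ j`. -/
theorem bconvex_one_dim_direction {n : ℕ} (A : Set (Fin n → ℤ)) (hfin : A.Finite)
    (hne : A.Nonempty) (hB : BConvexSet A)
    (hdim : Module.finrank ℝ (vectorSpan ℝ (convexHull ℝ (toR '' A))) = 1) :
    ∃ v : Fin n → ℤ,
      ((∃ i, v = eZ n i) ∨
       (∃ i j, i ≠ j ∧ (v = eZ n i + eZ n j ∨ v = eZ n i - eZ n j))) ∧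
      ∀ x ∈ A, ∀ y ∈ A, ∃ k : ℤ, x - y = k • v := by
  have hdim' : Module.finrank ℝ (vectorSpan ℝ (toR '' A)) = 1 := by
    rwa [← direction_affineSpan, affineSpan_convexHull, direction_affineSpan] at hdim
  -- A has two distinct points
  have hex : ∃ x ∈ A, ∃ y ∈ A, x ≠ y := by
    by_contra h
    push_neg at h
    obtain ⟨x, hx⟩ := hne
    have hA : toR '' A = {toR x} := by
      apply subset_antisymm
      · rintro _ ⟨y, hy, rfl⟩
        simp [h y hy x hx]
      · rintro _ rfl
        exact Set.mem_image_of_mem toR hx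
    rw [hA, vectorSpan_singleton] at hdim'
    simp at hdim'
  obtain ⟨x, hx, y, hy, hxy⟩ := hex
  have hexi : ∃ i : Fin n, x i ≠ y i := by
    by_contra h
    push_neg at h
    exact hxy (funext h)
  obtain ⟨i, hi⟩ := hexi
  rcases lt_or_gt_of_ne hi with hlt | hgt
  · -- x i < y i : swap roles
    rcases hB y hy x hx i hlt with ⟨h1, _⟩ | ⟨j, hj1, h1, _⟩ | ⟨j, hji, hj1, h1, _⟩
    · exact ⟨eZ n i, Or.inl ⟨i, rfl⟩,
        key A hdim' (eZ n i) i (by simp [eZ]) y hy h1⟩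
    · have hjne : j ≠ i := by
        intro h; subst h; exact absurd hj1 (not_lt.mpr hlt.le)
      refine ⟨eZ n i - eZ n j, Or.inr ⟨i, j, hjne.symm, Or.inr rfl⟩, ?_⟩
      have hv : (eZ n i - eZ n j) i = 1 := by simp [eZ, Ne.symm hjne]
      have h1' : y - (eZ n i - eZ n j) ∈ A := by
        have : y - (eZ n i - eZ n j) = y - eZ n i + eZ n j := by ring
        rwa [this]
      exact key A hdim' _ i hv y hy h1'
    · refine ⟨eZ n i + eZ n j, Or.inr ⟨i, j, Ne.symm hji, Or.inl rfl⟩, ?_⟩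
      have hv : (eZ n i + eZ n j) i = 1 := by simp [eZ, Ne.symm hji]
      have h1' : y - (eZ n i + eZ n j) ∈ A := by
        have : y - (eZ n i + eZ n j) = y - eZ n i - eZ n j := by ring
        rwa [this]
      exact key A hdim' _ i hv y hy h1'
  · rcases hB x hx y hy i hgt with ⟨h1, _⟩ | ⟨j, hj1, h1, _⟩ | ⟨j, hji, hj1, h1, _⟩
    · exact ⟨eZ n i, Or.inl ⟨i, rfl⟩,
        key A hdim' (eZ n i) i (by simp [eZ]) x hx h1⟩
    · have hjne : j ≠ i := by
        intro h; subst h; exact absurd hj1 (not_lt.mpr hgt.le)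
      refine ⟨eZ n i - eZ n j, Or.inr ⟨i, j, hjne.symm, Or.inr rfl⟩, ?_⟩
      have hv : (eZ n i - eZ n j) i = 1 := by simp [eZ, Ne.symm hjne]
      have h1' : x - (eZ n i - eZ n j) ∈ A := by
        have : x - (eZ n i - eZ n j) = x - eZ n i + eZ n j := by ring
        rwa [this]
      exact key A hdim' _ i hv x hx h1'
    · refine ⟨eZ n i + eZ n j, Or.inr ⟨i, j, Ne.symm hji, Or.inl rfl⟩, ?_⟩
      have hv : (eZ n i + eZ n j) i = 1 := by simp [eZ, Ne.symm hji]
      have h1' : x - (eZ n i + eZ n j) ∈ A := by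
        have : x - (eZ n i + eZ n j) = x - eZ n i - eZ n j := by ring
        rwa [this]
      exact key A hdim' _ i hv x hx h1'
end

section
/- If p(t) = Σ a_i t^i and q(t) = Σ b_j t^j are univariate polynomials with nonnegative coefficients whose coefficient sequences are log-concave and have no internal zeros, then the coefficient sequence of the product p(t)q(t) is also log-concave with no internal zeros. -/
/-- A sequence of reals is log-concave: `c_k · c_{k+2} ≤ c_{k+1}²` for all `k`. -/
def LogConcaveSeq (c : ℕ → ℝ) : Prop := ∀ k, c k * c (k + 2) ≤ c (k + 1) ^ 2

/-- A sequence has no internal zeros: its support is an interval. -/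
def NoInternalZeros (c : ℕ → ℝ) : Prop :=
  ∀ i j k, i ≤ j → j ≤ k → c i ≠ 0 → c k ≠ 0 → c j ≠ 0

/-!
Extend coefficients by zero to negative indices, so that `c n = ∑ t, a t * b (n - t)` over `ℤ`.
Log-concavity without internal zeros upgrades to `a (i - 1) * a (j + 1) ≤ a i * a j` for all
`i ≤ j`. The Binet–Cauchy identity writes `c (k + 1) ^ 2 - c k * c (k + 2)` as the sum over
`t < t'` of `(a t * a (t' - 1) - a t' * a (t - 1)) *
(b (k + 1 - t) * b (k + 2 - t') - b (k + 1 - t') * b (k + 2 - t))`, and both factors are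
nonnegative by the upgraded inequality. Nonnegative coefficients cannot cancel, so the support
of `c` is the sum of the supports of `a` and `b`, again an interval.
-/

open Finset Polynomial

theorem Finset.sum_mul_sum_sub_sum_mul_sum {ι R : Type*} [LinearOrder ι] [CommRing R]
    (s : Finset ι) (x y u v : ι → R) :
    (∑ t ∈ s, x t * y t) * (∑ t ∈ s, u t * v t) - (∑ t ∈ s, x t * v t) * (∑ t ∈ s, u t * y t) =
      ∑ t ∈ s, ∑ t' ∈ s with t < t', (x t * u t' - x t' * u t) * (y t * v t' - y t' * v t) := by
  set F : ι → ι → R := fun t t' => x t * u t' * (y t * v t' - y t' * v t)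
  have hsplit (t t' : ι) :
      F t t' = (if t < t' then F t t' else 0) + (if t' < t then F t t' else 0) := by
    rcases lt_trichotomy t t' with h | rfl | h
    · simp [h, h.not_gt]
    · simp [F]
    · simp [h, h.not_gt]
  calc _ = ∑ t ∈ s, ∑ t' ∈ s, F t t' := by
        simp only [F, sum_mul_sum, ← sum_sub_distrib]
        exact sum_congr rfl fun t _ => sum_congr rfl fun t' _ => by ring
    _ = ∑ t ∈ s, ∑ t' ∈ s, ((if t < t' then F t t' else 0) + (if t < t' then F t' t else 0)) := by
        conv_lhs => enter [2, t, 2, t']; rw [hsplit t t']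
        simp only [sum_add_distrib]
        rw [sum_comm (f := fun t t' => if t' < t then F t t' else 0)]
    _ = _ := by
        simp only [sum_filter, ← ite_add_zero]
        exact sum_congr rfl fun t _ => sum_congr rfl fun t' _ => by unfold F; split_ifs <;> ring

theorem LogConcaveSeq.mul_le_mul_of_le {c : ℕ → ℝ} (hlc : LogConcaveSeq c) (h0 : ∀ k, 0 ≤ c k)
    (hz : NoInternalZeros c) {i j : ℕ} (hij : i ≤ j) :
    c i * c (j + 2) ≤ c (i + 1) * c (j + 1) := by
  obtain ⟨d, rfl⟩ := Nat.exists_eq_add_of_le hij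
  induction d with
  | zero => simpa [sq] using hlc i
  | succ d ih =>
    rcases (h0 i).eq_or_lt with hi | hi
    · rw [← hi, zero_mul]; exact mul_nonneg (h0 _) (h0 _)
    rcases (h0 (i + d + 3)).eq_or_lt with hk | hk
    · rw [show i + (d + 1) + 2 = i + d + 3 by ring, ← hk, mul_zero]; exact mul_nonneg (h0 _) (h0 _)
    have hmid : 0 < c (i + d + 2) := (h0 _).lt_of_ne' <|
      hz i _ (i + d + 3) (by omega) (by omega) hi.ne' hk.ne'
    refine le_of_mul_le_mul_right ?_ hmid
    calc c i * c (i + (d + 1) + 2) * c (i + d + 2)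
        = c i * c (i + d + 2) * c (i + d + 3) := by ring_nf
      _ ≤ c (i + 1) * c (i + d + 1) * c (i + d + 3) :=
          mul_le_mul_of_nonneg_right (ih (by omega)) (h0 _)
      _ = c (i + 1) * (c (i + d + 1) * c (i + d + 1 + 2)) := by ring
      _ ≤ c (i + 1) * c (i + d + 2) ^ 2 := mul_le_mul_of_nonneg_left (hlc _) (h0 _)
      _ = c (i + 1) * c (i + (d + 1) + 1) * c (i + d + 2) := by ring_nf

theorem NoInternalZeros.coeff_ne_zero {p : ℝ[X]} (hz : NoInternalZeros p.coeff) (hp : p ≠ 0)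
    {n : ℕ} (h₁ : p.natTrailingDegree ≤ n) (h₂ : n ≤ p.natDegree) : p.coeff n ≠ 0 :=
  hz _ n _ h₁ h₂ (trailingCoeff_nonzero_iff_nonzero.2 hp) (leadingCoeff_ne_zero.2 hp)

namespace Polynomial

variable {R : Type*} [Semiring R]

def intCoeff (p : R[X]) (n : ℤ) : R := if 0 ≤ n then p.coeff n.toNat else 0

@[simp] lemma intCoeff_natCast (p : R[X]) (n : ℕ) : p.intCoeff n = p.coeff n := by
  simp [intCoeff]

lemma intCoeff_of_neg (p : R[X]) {n : ℤ} (hn : n < 0) : p.intCoeff n = 0 :=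
  if_neg hn.not_ge

lemma coeff_mul_eq_sum_intCoeff (p q : R[X]) (n : ℕ) (m N : ℤ) (hN : N = m + n) {s : Finset ℤ}
    (hs : Icc m N ⊆ s) :
    (p * q).coeff n = ∑ t ∈ s, p.intCoeff (t - m) * q.intCoeff (N - t) := by
  rw [← sum_subset hs fun t _ ht => ?_, coeff_mul, Nat.sum_antidiagonal_eq_sum_range_succ_mk]
  · refine sum_nbij' (fun i => m + i) (fun t => (t - m).toNat) ?_ ?_ ?_ ?_ ?_
    · intro i hi; simp only [mem_range, mem_Icc] at hi ⊢; omega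
    · intro t ht; simp only [mem_range, mem_Icc] at ht ⊢; omega
    · intro i _; simp
    · intro t ht; simp only [mem_Icc] at ht; omega
    · intro i hi
      simp only [mem_range] at hi
      rw [show m + i - m = (i : ℤ) by ring, show N - (m + i) = ((n - i : ℕ) : ℤ) by omega]
      simp
  · simp only [mem_Icc, not_and_or, not_le] at ht
    rcases ht with h | h
    · rw [p.intCoeff_of_neg (by omega), zero_mul]
    · rw [q.intCoeff_of_neg (by omega), mul_zero]

lemma intCoeff_nonneg [Preorder R] {p : R[X]} (hp : ∀ k, 0 ≤ p.coeff k) (n : ℤ) :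
    0 ≤ p.intCoeff n := by
  unfold intCoeff
  split_ifs
  exacts [hp _, le_rfl]

theorem coeff_mul_pos [PartialOrder R] [IsStrictOrderedRing R] {p q : R[X]}
    (hp : ∀ k, 0 ≤ p.coeff k) (hq : ∀ k, 0 ≤ q.coeff k) {u v : ℕ}
    (hu : 0 < p.coeff u) (hv : 0 < q.coeff v) : 0 < (p * q).coeff (u + v) := by
  rw [coeff_mul]
  refine (mul_pos hu hv).trans_le <| single_le_sum (f := fun x => p.coeff x.1 * q.coeff x.2)
    (fun x _ => mul_nonneg (hp _) (hq _)) (a := (u, v)) (mem_antidiagonal.2 rfl)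

theorem intCoeff_mul_le_mul_of_le {p : ℝ[X]} (hlc : LogConcaveSeq p.coeff)
    (h0 : ∀ k, 0 ≤ p.coeff k) (hz : NoInternalZeros p.coeff) {i j : ℤ} (hij : i ≤ j) :
    p.intCoeff (i - 1) * p.intCoeff (j + 1) ≤ p.intCoeff i * p.intCoeff j := by
  rcases lt_or_ge i 1 with hi | hi
  · rw [p.intCoeff_of_neg (by omega), zero_mul]
    exact mul_nonneg (intCoeff_nonneg h0 _) (intCoeff_nonneg h0 _)
  obtain ⟨a, rfl⟩ : ∃ a : ℕ, i = a + 1 := ⟨(i - 1).toNat, by omega⟩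
  obtain ⟨b, rfl⟩ : ∃ b : ℕ, j = b + 1 := ⟨(j - 1).toNat, by omega⟩
  have := hlc.mul_le_mul_of_le h0 hz (i := a) (j := b) (by omega)
  rw [add_sub_cancel_right, add_assoc]
  exact_mod_cast this

theorem logConcaveSeq_coeff_mul {p q : ℝ[X]} (hp0 : ∀ k, 0 ≤ p.coeff k)
    (hq0 : ∀ k, 0 ≤ q.coeff k) (hpl : LogConcaveSeq p.coeff) (hql : LogConcaveSeq q.coeff)
    (hpz : NoInternalZeros p.coeff) (hqz : NoInternalZeros q.coeff) :
    LogConcaveSeq (p * q).coeff := by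
  intro k
  set A := p.intCoeff
  set B := q.intCoeff
  set s := Icc (0 : ℤ) (k + 2)
  have hs {m N : ℤ} (hm : 0 ≤ m) (hN : N ≤ k + 2) : Icc m N ⊆ s :=
    Icc_subset_Icc hm hN
  have hk : (p * q).coeff k = ∑ t ∈ s, A (t - 1) * B (k + 1 - t) :=
    coeff_mul_eq_sum_intCoeff p q k 1 (k + 1) (by ring) (hs zero_le_one (by omega))
  have hk₁ : (p * q).coeff (k + 1) = ∑ t ∈ s, A (t - 1) * B (k + 2 - t) :=
    coeff_mul_eq_sum_intCoeff p q _ 1 (k + 2) (by push_cast; ring) (hs zero_le_one le_rfl)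
  have hk₁' : (p * q).coeff (k + 1) = ∑ t ∈ s, A t * B (k + 1 - t) := by
    simpa only [sub_zero] using
      coeff_mul_eq_sum_intCoeff p q (k + 1) 0 (k + 1) (by push_cast; ring) (hs le_rfl (by omega))
  have hk₂ : (p * q).coeff (k + 2) = ∑ t ∈ s, A t * B (k + 2 - t) := by
    simpa only [sub_zero] using
      coeff_mul_eq_sum_intCoeff p q (k + 2) 0 (k + 2) (by push_cast; ring) (hs le_rfl le_rfl)
  have hdisc : (p * q).coeff (k + 1) ^ 2 - (p * q).coeff k * (p * q).coeff (k + 2) =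
      ∑ t ∈ s, ∑ t' ∈ s with t < t', (A t * A (t' - 1) - A t' * A (t - 1)) *
        (B (k + 1 - t) * B (k + 2 - t') - B (k + 1 - t') * B (k + 2 - t)) := by
    rw [← sum_mul_sum_sub_sum_mul_sum, sq]
    nth_rw 1 [hk₁']
    rw [hk₁, hk, hk₂]
    ring
  rw [← sub_nonneg, hdisc]
  refine sum_nonneg fun t _ => sum_nonneg fun t' ht' => mul_nonneg ?_ ?_
  all_goals
    have htt' : t < t' := (mem_filter.1 ht').2
    rw [sub_nonneg]
  · rw [mul_comm (A t')]
    simpa using intCoeff_mul_le_mul_of_le hpl hp0 hpz (i := t) (j := t' - 1) (by omega)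
  · have := intCoeff_mul_le_mul_of_le hql hq0 hqz (i := k + 2 - t') (j := k + 1 - t) (by omega)
    rwa [show (k : ℤ) + 2 - t' - 1 = k + 1 - t' by ring,
      show (k : ℤ) + 1 - t + 1 = k + 2 - t by ring, mul_comm (B (k + 2 - t'))] at this

theorem noInternalZeros_coeff_mul {p q : ℝ[X]} (hp0 : ∀ k, 0 ≤ p.coeff k)
    (hq0 : ∀ k, 0 ≤ q.coeff k) (hpz : NoInternalZeros p.coeff) (hqz : NoInternalZeros q.coeff) :
    NoInternalZeros (p * q).coeff := by
  intro i j k hij hjk hi hk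
  have hp : p ≠ 0 := by rintro rfl; simp at hi
  have hq : q ≠ 0 := by rintro rfl; simp at hi
  have hlo := natTrailingDegree_le_of_ne_zero hi
  have hhi := le_natDegree_of_ne_zero hk
  rw [natTrailingDegree_mul hp hq] at hlo
  rw [natDegree_mul hp hq] at hhi
  have := p.natTrailingDegree_le_natDegree
  have := q.natTrailingDegree_le_natDegree
  set u := min p.natDegree (j - q.natTrailingDegree)
  have hu := (hp0 u).lt_of_ne' (hpz.coeff_ne_zero hp (by omega) (by omega))
  have hv := (hq0 (j - u)).lt_of_ne' (hqz.coeff_ne_zero hq (by omega) (by omega))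
  rw [← Nat.add_sub_of_le (show u ≤ j by omega)]
  exact (coeff_mul_pos hp0 hq0 hu hv).ne'

end Polynomial

/-- The product of two polynomials with nonnegative, log-concave coefficient
sequences having no internal zeros again has a log-concave coefficient sequence
with no internal zeros. -/
theorem logConcave_noInternalZeros_mul (p q : Polynomial ℝ)
    (hp0 : ∀ k, 0 ≤ p.coeff k) (hq0 : ∀ k, 0 ≤ q.coeff k)
    (hpl : LogConcaveSeq p.coeff) (hql : LogConcaveSeq q.coeff)
    (hpz : NoInternalZeros p.coeff) (hqz : NoInternalZeros q.coeff) :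
    LogConcaveSeq (p * q).coeff ∧ NoInternalZeros (p * q).coeff :=
  ⟨logConcaveSeq_coeff_mul hp0 hq0 hpl hql hpz hqz, noInternalZeros_coeff_mul hp0 hq0 hpz hqz⟩
end

section
/- For any B-concave function f : ℤⁿ → ℝ ∪ {-∞} with finite effective domain, every edge (1-dimensional face) of the regular subdivision of dom(f) induced by f is parallel to some e_i or to e_i ± e_j with i ≠ j. -/
def dotR {n : ℕ} (u : Fin n → ℝ) (x : Fin n → ℤ) : ℝ := ∑ i, u i * (x i : ℝ)

def BConcave {n : ℕ} (f : (Fin n → ℤ) → EReal) : Prop :=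
  ∀ x, f x ≠ ⊥ → ∀ y, f y ≠ ⊥ → ∀ i : Fin n, y i < x i →
    (f x + f y ≤ f (x - eZ n i) + f (y + eZ n i)) ∨
    (∃ j, x j < y j ∧ f x + f y ≤ f (x - eZ n i + eZ n j) + f (y + eZ n i - eZ n j)) ∨
    (∃ j, j ≠ i ∧ y j < x j ∧ f x + f y ≤ f (x - eZ n i - eZ n j) + f (y + eZ n i + eZ n j))

/-!
The face `F` consists of the maximizers of `z ↦ ⟪w, z⟫ + f z`. If `x, y ∈ F` differ in
coordinate `i`, B-concavity gives a direction `d ∈ {e_i, e_i - e_j, e_i + e_j}` with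
`f x + f y ≤ f (x - d) + f (y + d)`; since `⟪w, ·⟫` is additive, one of `x - d`, `y + d` is again
a maximizer, so `F` contains two points differing by `d`. As `F` spans a line, every difference
of points of `F` is a real multiple of `d`, and because `d i = 1` that multiple is an integer.
-/

open Module

section

variable {n : ℕ}

def IsBDirection (v : Fin n → ℤ) : Prop :=
  (∃ i, v = eZ n i) ∨ (∃ i j, i ≠ j ∧ (v = eZ n i + eZ n j ∨ v = eZ n i - eZ n j))

def upperFace (f : (Fin n → ℤ) → EReal) (w : Fin n → ℝ) : Set (Fin n → ℤ) :=
  {x | f x ≠ ⊥ ∧ IsMaxOn (fun z => ((dotR w z : ℝ) : EReal) + f z) {z | f z ≠ ⊥} x}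

lemma toR_sub (a b : Fin n → ℤ) : toR (a - b) = toR a - toR b := by
  funext c
  simp [toR]

lemma dotR_add (w : Fin n → ℝ) (a b : Fin n → ℤ) : dotR w (a + b) = dotR w a + dotR w b := by
  simp only [dotR, Pi.add_apply, Int.cast_add, mul_add, Finset.sum_add_distrib]

lemma IsMaxOn.isMaxOn_or_isMaxOn_of_add_le {α : Type*} {φ : α → EReal} {s : Set α}
    {x y x' y' : α} (hx : IsMaxOn φ s x) (hxy : φ x ≤ φ y) (hx' : x' ∈ s) (hy' : y' ∈ s)
    (h : φ x + φ y ≤ φ x' + φ y') : IsMaxOn φ s x' ∨ IsMaxOn φ s y' := by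
  have of_eq : ∀ z, φ z = φ x → IsMaxOn φ s z := fun z hz =>
    isMaxOn_iff.mpr fun u hu => (isMaxOn_iff.mp hx u hu).trans_eq hz.symm
  rcases (isMaxOn_iff.mp hx x' hx').lt_or_eq with h₁ | h₁
  · rcases (isMaxOn_iff.mp hx y' hy').lt_or_eq with h₂ | h₂
    · exact absurd ((add_le_add_right hxy _).trans h) (EReal.add_lt_add h₁ h₂).not_ge
    · exact Or.inr (of_eq y' h₂)
  · exact Or.inl (of_eq x' h₁)

lemma exists_mem_upperFace_sub_eq {f : (Fin n → ℤ) → EReal} {w : Fin n → ℝ}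
    {x y : Fin n → ℤ} (hx : x ∈ upperFace f w) (hy : y ∈ upperFace f w) (d : Fin n → ℤ)
    (h : f x + f y ≤ f (x - d) + f (y + d)) :
    ∃ p ∈ upperFace f w, ∃ q ∈ upperFace f w, p - q = d := by
  set φ : (Fin n → ℤ) → EReal := fun z => ((dotR w z : ℝ) : EReal) + f z
  have hsum : f (x - d) + f (y + d) ≠ ⊥ :=
    ne_bot_of_le_ne_bot (EReal.add_ne_bot_iff.mpr ⟨hx.1, hy.1⟩) h
  obtain ⟨hxd, hyd⟩ := EReal.add_ne_bot_iff.mp hsum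
  have split : ∀ a b, φ a + φ b = ((dotR w (a + b) : ℝ) : EReal) + (f a + f b) := fun a b => by
    simp only [φ, dotR_add, EReal.coe_add]
    exact add_add_add_comm _ _ _ _
  have hφ : φ x + φ y ≤ φ (x - d) + φ (y + d) := by
    rw [split, split, show x - d + (y + d) = x + y by abel]
    exact add_le_add_right h _
  rcases hx.2.isMaxOn_or_isMaxOn_of_add_le (hy.2 hx.1) hxd hyd hφ with h' | h'
  · exact ⟨x, hx, x - d, ⟨hxd, h'⟩, sub_sub_cancel x d⟩
  · exact ⟨y + d, ⟨hyd, h'⟩, y, hy, add_sub_cancel_left y d⟩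

lemma exists_isBDirection_sub_mem_upperFace {f : (Fin n → ℤ) → EReal} (hB : BConcave f)
    {w : Fin n → ℝ} {x y : Fin n → ℤ} (hx : x ∈ upperFace f w) (hy : y ∈ upperFace f w)
    {i : Fin n} (hlt : y i < x i) :
    ∃ d, IsBDirection d ∧ d i = 1 ∧ ∃ p ∈ upperFace f w, ∃ q ∈ upperFace f w, p - q = d := by
  rcases hB x hx.1 y hy.1 i hlt with h | ⟨j, hj, h⟩ | ⟨j, hji, -, h⟩
  · exact ⟨eZ n i, Or.inl ⟨i, rfl⟩, by simp [eZ], exists_mem_upperFace_sub_eq hx hy _ h⟩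
  · have hij : i ≠ j := by rintro rfl; exact hj.not_gt hlt
    rw [show x - eZ n i + eZ n j = x - (eZ n i - eZ n j) by abel,
      show y + eZ n i - eZ n j = y + (eZ n i - eZ n j) by abel] at h
    exact ⟨eZ n i - eZ n j, Or.inr ⟨i, j, hij, Or.inr rfl⟩, by simp [eZ, hij],
      exists_mem_upperFace_sub_eq hx hy _ h⟩
  · rw [sub_sub, add_assoc] at h
    exact ⟨eZ n i + eZ n j, Or.inr ⟨i, j, hji.symm, Or.inl rfl⟩, by simp [eZ, hji.symm],
      exists_mem_upperFace_sub_eq hx hy _ h⟩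

lemma toR_sub_mem_vectorSpan {F : Set (Fin n → ℤ)} {x y : Fin n → ℤ} (hx : x ∈ F) (hy : y ∈ F) :
    toR (x - y) ∈ vectorSpan ℝ (toR '' F) := by
  rw [toR_sub]
  exact vsub_mem_vectorSpan ℝ (Set.mem_image_of_mem toR hx) (Set.mem_image_of_mem toR hy)

lemma exists_apply_lt_of_finrank_vectorSpan_pos {F : Set (Fin n → ℤ)}
    (hpos : 0 < finrank ℝ (vectorSpan ℝ (toR '' F))) :
    ∃ x ∈ F, ∃ y ∈ F, ∃ i, y i < x i := by
  have hne : vectorSpan ℝ (toR '' F) ≠ ⊥ := by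
    intro h
    rw [h, finrank_bot] at hpos
    exact hpos.false
  obtain ⟨_, ⟨x, hx, rfl⟩, _, ⟨y, hy, rfl⟩, hxy⟩ :=
    Set.not_subsingleton_iff.mp (mt (vectorSpan_eq_bot_iff_subsingleton ℝ).mpr hne)
  obtain ⟨i, hi⟩ := Function.ne_iff.mp hxy
  rcases (by simpa [toR] using hi : x i ≠ y i).lt_or_gt with h | h
  · exact ⟨y, hy, x, hx, i, h⟩
  · exact ⟨x, hx, y, hy, i, h⟩

lemma eq_zsmul_of_smul_toR_eq {u d : Fin n → ℤ} {t : ℝ} {i : Fin n} (h : t • toR d = toR u)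
    (hi : d i = 1) : u = u i • d := by
  have ht : t = u i := by simpa [toR, hi] using congrFun h i
  funext c
  have hc := congrFun h c
  simp only [toR, Pi.smul_apply, smul_eq_mul, ht] at hc
  simpa using (Int.cast_injective (α := ℝ) (by push_cast; exact hc)).symm

lemma sub_eq_zsmul_of_finrank_vectorSpan_eq_one {F : Set (Fin n → ℤ)}
    (hdim : finrank ℝ (vectorSpan ℝ (toR '' F)) = 1) {p q : Fin n → ℤ} (hp : p ∈ F) (hq : q ∈ F)
    {i : Fin n} (hi : (p - q) i = 1) {x y : Fin n → ℤ} (hx : x ∈ F) (hy : y ∈ F) :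
    x - y = (x - y) i • (p - q) := by
  have hd0 : toR (p - q) ≠ 0 := fun h => by simpa [toR, hi] using congrFun h i
  have hspan : ℝ ∙ toR (p - q) = vectorSpan ℝ (toR '' F) :=
    Submodule.eq_of_le_of_finrank_eq
      ((Submodule.span_singleton_le_iff_mem _ _).mpr (toR_sub_mem_vectorSpan hp hq))
      (by rw [finrank_span_singleton hd0, hdim])
  obtain ⟨t, ht⟩ := Submodule.mem_span_singleton.mp (hspan ▸ toR_sub_mem_vectorSpan hx hy)
  exact eq_zsmul_of_smul_toR_eq ht hi

end

theorem bconcave_edge_directions_general {n : ℕ} (f : (Fin n → ℤ) → EReal)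
    (hB : BConcave f)
    (w : Fin n → ℝ)
    (F : Set (Fin n → ℤ))
    (hF : F = {x | f x ≠ ⊥ ∧
      ∀ y, f y ≠ ⊥ → ((dotR w y : ℝ) : EReal) + f y ≤ ((dotR w x : ℝ) : EReal) + f x})
    (hdim : Module.finrank ℝ (vectorSpan ℝ (toR '' F)) = 1) :
    ∃ v : Fin n → ℤ,
      ((∃ i, v = eZ n i) ∨
       (∃ i j, i ≠ j ∧ (v = eZ n i + eZ n j ∨ v = eZ n i - eZ n j))) ∧
      ∀ x ∈ F, ∀ y ∈ F, ∃ k : ℤ, x - y = k • v := by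
  have hF' : F = upperFace f w := hF
  subst hF'
  obtain ⟨x, hx, y, hy, i, hlt⟩ := exists_apply_lt_of_finrank_vectorSpan_pos (hdim ▸ one_pos)
  obtain ⟨d, hd, hdi, p, hp, q, hq, rfl⟩ := exists_isBDirection_sub_mem_upperFace hB hx hy hlt
  exact ⟨p - q, hd, fun x hx y hy =>
    ⟨_, sub_eq_zsmul_of_finrank_vectorSpan_eq_one hdim hp hq hdi hx hy⟩⟩

/-- For a B-concave function `f` with finite effective domain, every edge
(1-dimensional upper face, i.e. a maximizer set in direction `(w,1)` whose
span is 1-dimensional) of the regular subdivision of `dom f` induced by `f`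
is parallel to some `e_i` or `e_i ± e_j` with `i ≠ j`. -/
theorem bconcave_edge_directions {n : ℕ} (f : (Fin n → ℤ) → EReal)
    (hB : BConcave f) (hfin : {x | f x ≠ ⊥}.Finite) (hne : {x | f x ≠ ⊥}.Nonempty)
    (w : Fin n → ℝ)
    (F : Set (Fin n → ℤ))
    (hF : F = {x | f x ≠ ⊥ ∧
      ∀ y, f y ≠ ⊥ → ((dotR w y : ℝ) : EReal) + f y ≤ ((dotR w x : ℝ) : EReal) + f x})
    (hdim : Module.finrank ℝ (vectorSpan ℝ (toR '' F)) = 1) :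
    ∃ v : Fin n → ℤ,
      ((∃ i, v = eZ n i) ∨
       (∃ i j, i ≠ j ∧ (v = eZ n i + eZ n j ∨ v = eZ n i - eZ n j))) ∧
      ∀ x ∈ F, ∀ y ∈ F, ∃ k : ℤ, x - y = k • v :=
  bconcave_edge_directions_general f hB w F hF hdim
end
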